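/- Suppose f₀ : ℝⁿ → ℝ is measurable and possesses an A₁ majorant, i.e., there is a locally integrable w₀ : ℝⁿ → (0,∞) with Mw₀ ≤ C·w₀ almost everywhere (C ≥ 1) and |f₀| ≤ w₀ almost everywhere. Set w₁ = w₀ + 1 and ρ(f) = inf{C' ≥ 0 : |f| ≤ C'·w₁ almost everywhere} (inf ∅ = ∞). Then ρ(f₀) ≤ 1 < ∞ and ρ(Mf) ≤ C·ρ(f) for every measurable f; that is, f₀ belongs to the space X₀ = {f : ρ(f) < ∞} on which the Hardy–Littlewood maximal operator is bounded. -/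

import Mathlib

open MeasureTheory ENNReal Filter

/-- An axis-parallel cube in `ℝⁿ`. -/
def IsCube {n : ℕ} (Q : Set (Fin n → ℝ)) : Prop :=
  ∃ (a : Fin n → ℝ) (r : ℝ), 0 < r ∧ Q = Set.Icc a (fun i => a i + r)

/-- The (uncentered) Hardy–Littlewood maximal function over axis-parallel cubes:
`M f x = ⨆_{Q ∋ x} (1/|Q|) ∫_Q f`. -/
noncomputable def maximal {n : ℕ} (f : (Fin n → ℝ) → ℝ≥0∞) (x : Fin n → ℝ) : ℝ≥0∞ :=
  ⨆ (Q : Set (Fin n → ℝ)) (_ : IsCube Q) (_ : x ∈ Q), (∫⁻ y in Q, f y) / volume Q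

/-- `rho w f = inf {C ≥ 0 | f ≤ C • w a.e.}`, with `inf ∅ = ∞`. -/
noncomputable def rho {n : ℕ} (w : (Fin n → ℝ) → ℝ) (f : (Fin n → ℝ) → ℝ≥0∞) : ℝ≥0∞ :=
  sInf (ENNReal.ofReal ''
    {C : ℝ | 0 ≤ C ∧ ∀ᵐ x ∂(volume : Measure (Fin n → ℝ)), f x ≤ ENNReal.ofReal (C * w x)})

lemma maximal_mono_ae {n : ℕ} {f g : (Fin n → ℝ) → ℝ≥0∞}
    (h : ∀ᵐ y ∂(volume : Measure (Fin n → ℝ)), f y ≤ g y) (x : Fin n → ℝ) :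
    maximal f x ≤ maximal g x := by
  refine iSup_mono fun Q => iSup_mono fun hQ => iSup_mono fun hx => ?_
  exact ENNReal.div_le_div_right (lintegral_mono_ae (ae_restrict_of_ae h)) _

lemma le_maximal {n : ℕ} (f : (Fin n → ℝ) → ℝ≥0∞) {x : Fin n → ℝ} {Q : Set (Fin n → ℝ)}
    (hQ : IsCube Q) (hx : x ∈ Q) : (∫⁻ y in Q, f y) / volume Q ≤ maximal f x :=
  le_iSup₂_of_le Q hQ (le_iSup_of_le hx le_rfl)

lemma maximal_const_mul_le {n : ℕ} (c : ℝ≥0∞) (hc : c ≠ ⊤) (f : (Fin n → ℝ) → ℝ≥0∞)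
    (x : Fin n → ℝ) : maximal (fun y => c * f y) x ≤ c * maximal f x := by
  refine iSup_le fun Q => iSup_le fun hQ => iSup_le fun hx => ?_
  rw [lintegral_const_mul' c _ hc, mul_div_assoc]
  exact mul_le_mul_right (le_maximal f hQ hx) c

lemma maximal_add_le {n : ℕ} {f : (Fin n → ℝ) → ℝ≥0∞} (g : (Fin n → ℝ) → ℝ≥0∞)
    (hf : AEMeasurable f (volume : Measure (Fin n → ℝ))) (x : Fin n → ℝ) :
    maximal (fun y => f y + g y) x ≤ maximal f x + maximal g x := by
  refine iSup_le fun Q => iSup_le fun hQ => iSup_le fun hx => ?_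
  rw [lintegral_add_left' hf.restrict, ENNReal.add_div]
  exact add_le_add (le_maximal f hQ hx) (le_maximal g hQ hx)

lemma maximal_one_le {n : ℕ} (x : Fin n → ℝ) :
    maximal (fun _ => (1 : ℝ≥0∞)) x ≤ 1 := by
  refine iSup_le fun Q => iSup_le fun hQ => iSup_le fun hx => ?_
  rw [setLIntegral_one]
  exact ENNReal.div_self_le_one

/-- if `f₀` has an `A₁` majorant `w₀` (with constant `C ≥ 1`), then with
`w₁ = w₀ + 1` one has `rho w₁ f₀ ≤ 1 < ∞` and `rho w₁ (M f) ≤ C · rho w₁ f` for every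
measurable `f`; i.e. `f₀` belongs to the space `X₀ = {f : rho w₁ f < ∞}` on which the
maximal operator is bounded. -/
theorem mem_X0_of_A1_majorant {n : ℕ} (C : ℝ) (hC : 1 ≤ C)
    (f₀ w₀ : (Fin n → ℝ) → ℝ) (hf₀ : Measurable f₀)
    (hw₀_pos : ∀ x, 0 < w₀ x) (hw₀_loc : LocallyIntegrable w₀ volume)
    (hA1 : ∀ᵐ x ∂(volume : Measure (Fin n → ℝ)),
      maximal (fun y => ENNReal.ofReal (w₀ y)) x ≤ ENNReal.ofReal (C * w₀ x))
    (hmaj : ∀ᵐ x ∂(volume : Measure (Fin n → ℝ)), |f₀ x| ≤ w₀ x) :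
    rho (fun x => w₀ x + 1) (fun x => ENNReal.ofReal |f₀ x|) ≤ 1 ∧
    rho (fun x => w₀ x + 1) (fun x => ENNReal.ofReal |f₀ x|) < ⊤ ∧
    ∀ f : (Fin n → ℝ) → ℝ, Measurable f →
      rho (fun x => w₀ x + 1) (maximal (fun y => ENNReal.ofReal |f y|)) ≤
        ENNReal.ofReal C * rho (fun x => w₀ x + 1) (fun x => ENNReal.ofReal |f x|) := by
  set w₁ : (Fin n → ℝ) → ℝ := fun x => w₀ x + 1 with hw₁
  have hw₀m : AEMeasurable (fun y => ENNReal.ofReal (w₀ y))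
      (volume : Measure (Fin n → ℝ)) :=
    ENNReal.measurable_ofReal.comp_aemeasurable hw₀_loc.aestronglyMeasurable.aemeasurable
  -- `rho w₁ f₀ ≤ 1`
  have h1 : rho w₁ (fun x => ENNReal.ofReal |f₀ x|) ≤ 1 := by
    have : (1 : ℝ≥0∞) ∈ ENNReal.ofReal ''
        {C' : ℝ | 0 ≤ C' ∧ ∀ᵐ x ∂(volume : Measure (Fin n → ℝ)),
          ENNReal.ofReal |f₀ x| ≤ ENNReal.ofReal (C' * w₁ x)} := by
      refine ⟨1, ⟨zero_le_one, ?_⟩, by simp⟩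
      filter_upwards [hmaj] with x hx
      refine ENNReal.ofReal_le_ofReal ?_
      simp only [hw₁, one_mul]
      linarith
    exact sInf_le this
  refine ⟨h1, lt_of_le_of_lt h1 (by norm_num), ?_⟩
  -- key a.e. bound on `maximal w₁`
  have hkey : ∀ᵐ x ∂(volume : Measure (Fin n → ℝ)),
      maximal (fun y => ENNReal.ofReal (w₁ y)) x ≤ ENNReal.ofReal (C * w₁ x) := by
    filter_upwards [hA1] with x hx
    have e1 : (fun y => ENNReal.ofReal (w₁ y)) =
        fun y => ENNReal.ofReal (w₀ y) + 1 := by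
      funext y
      rw [hw₁, ENNReal.ofReal_add (hw₀_pos y).le zero_le_one, ENNReal.ofReal_one]
    calc maximal (fun y => ENNReal.ofReal (w₁ y)) x
        ≤ maximal (fun y => ENNReal.ofReal (w₀ y)) x + maximal (fun _ => (1 : ℝ≥0∞)) x := by
          rw [e1]; exact maximal_add_le _ hw₀m x
      _ ≤ ENNReal.ofReal (C * w₀ x) + 1 := add_le_add hx (maximal_one_le x)
      _ ≤ ENNReal.ofReal (C * w₀ x) + ENNReal.ofReal C := by
          rw [← ENNReal.ofReal_one]
          exact add_le_add le_rfl (ENNReal.ofReal_le_ofReal hC)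
      _ = ENNReal.ofReal (C * w₁ x) := by
          rw [← ENNReal.ofReal_add (mul_nonneg (by linarith) (hw₀_pos x).le) (by linarith)]
          simp only [hw₁]
          ring_nf
  intro f hf
  -- membership transfer: if `C'` works for `f`, then `C * C'` works for `M f`
  have hstep : ∀ C' : ℝ, 0 ≤ C' →
      (∀ᵐ x ∂(volume : Measure (Fin n → ℝ)),
        ENNReal.ofReal |f x| ≤ ENNReal.ofReal (C' * w₁ x)) →
      (0 ≤ C * C' ∧ ∀ᵐ x ∂(volume : Measure (Fin n → ℝ)),
        maximal (fun y => ENNReal.ofReal |f y|) x ≤ ENNReal.ofReal ((C * C') * w₁ x)) := by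
    intro C' hC' hbd
    refine ⟨mul_nonneg (by linarith) hC', ?_⟩
    filter_upwards [hkey] with x hx
    calc maximal (fun y => ENNReal.ofReal |f y|) x
        ≤ maximal (fun y => ENNReal.ofReal (C' * w₁ y)) x := maximal_mono_ae hbd x
      _ = maximal (fun y => ENNReal.ofReal C' * ENNReal.ofReal (w₁ y)) x := by
          simp_rw [← ENNReal.ofReal_mul hC']
      _ ≤ ENNReal.ofReal C' * maximal (fun y => ENNReal.ofReal (w₁ y)) x :=
          maximal_const_mul_le _ ENNReal.ofReal_ne_top _ x
      _ ≤ ENNReal.ofReal C' * ENNReal.ofReal (C * w₁ x) := mul_le_mul_right hx _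
      _ = ENNReal.ofReal ((C * C') * w₁ x) := by
          rw [← ENNReal.ofReal_mul hC']; ring_nf
  -- sInf manipulation
  have hCne0 : ENNReal.ofReal C ≠ 0 := by
    simp only [ne_eq, ENNReal.ofReal_eq_zero, not_le]; linarith
  have hrhs : ENNReal.ofReal C * rho w₁ (fun x => ENNReal.ofReal |f x|) =
      ⨅ C' ∈ {C' : ℝ | 0 ≤ C' ∧ ∀ᵐ x ∂(volume : Measure (Fin n → ℝ)),
        ENNReal.ofReal |f x| ≤ ENNReal.ofReal (C' * w₁ x)},
        ENNReal.ofReal C * ENNReal.ofReal C' := by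
    rw [rho, sInf_image, ENNReal.mul_iInf_of_ne hCne0 ENNReal.ofReal_ne_top]
    exact iInf_congr fun C' => ENNReal.mul_iInf_of_ne hCne0 ENNReal.ofReal_ne_top
  rw [hrhs]
  refine le_iInf fun C' => le_iInf fun hC' => ?_
  obtain ⟨h0, hbd⟩ := hstep C' hC'.1 hC'.2
  refine le_trans (sInf_le ⟨C * C', ⟨h0, hbd⟩, rfl⟩) ?_
  rw [← ENNReal.ofReal_mul (by linarith)]
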